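/- arXiv:2301.07277 — 2 statements merged into one kernel-verified Lean document; each statement's English description precedes it below -/
import Mathlib

section
/- The rate loss ΔR = log₂(1 + P₁g/σ²) − log₂(1 + P₁g/(P₂gf² + σ²)) satisfies ΔR ≤ log₂(1 + (P₁g/σ²)·(P₂f²/(P₂f² + P₁))). -/
open Real

theorem rate_loss_upper_bound
    (P1 P2 g s2 f : ℝ) (hP1 : 0 < P1) (hP2 : 0 < P2) (hg : 0 < g)
    (hs2 : 0 < s2) (hf : 0 < f) :
    Real.logb 2 (1 + P1 * g / s2) -
      Real.logb 2 (1 + P1 * g / (P2 * g * f ^ 2 + s2)) ≤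
    Real.logb 2 (1 + (P1 * g / s2) * (P2 * f ^ 2 / (P2 * f ^ 2 + P1))) := by
  have hD : 0 < P2 * g * f ^ 2 + s2 := by positivity
  have hE : 0 < P2 * f ^ 2 + P1 := by positivity
  have hx : 0 < 1 + P1 * g / s2 := by positivity
  have hy : 0 < 1 + P1 * g / (P2 * g * f ^ 2 + s2) := by positivity
  rw [← Real.logb_div (ne_of_gt hx) (ne_of_gt hy)]
  apply Real.logb_le_logb_of_le one_lt_two (by positivity)
  rw [div_le_iff₀ hy]
  have h1 : 1 + P1 * g / s2 = (s2 + P1 * g) / s2 := by field_simp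
  have h2 : 1 + P1 * g / (P2 * g * f ^ 2 + s2) =
      (P2 * g * f ^ 2 + s2 + P1 * g) / (P2 * g * f ^ 2 + s2) := by field_simp
  have h3 : 1 + P1 * g / s2 * (P2 * f ^ 2 / (P2 * f ^ 2 + P1)) =
      (s2 * (P2 * f ^ 2 + P1) + P1 * g * (P2 * f ^ 2)) / (s2 * (P2 * f ^ 2 + P1)) := by
    field_simp
  rw [h1, h2, h3, div_mul_div_comm, div_le_div_iff₀ (by positivity) (by positivity)]
  nlinarith [mul_pos (mul_pos hP1 hg) hs2, sq_nonneg (P1*g), mul_pos hP1 hP2,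
    mul_nonneg (mul_nonneg (mul_nonneg hP1.le hg.le) hs2.le) (mul_pos hP2 (pow_pos hf 2)).le,
    mul_nonneg (mul_nonneg hs2.le hs2.le) hE.le]
end

section
/- Fresnel (second-order Taylor) distance approximation error bound: for r > 0, real θ with |θ| < 1, and real δ with |δ|·d ≤ r/2 where d > 0, the distance r⁽ⁿ⁾ = √(r² + δ²d² − 2rθδd) satisfies |r⁽ⁿ⁾ − (r − δdθ + δ²d²(1−θ²)/(2r))| ≤ C·(δd)³/r² for some absolute constant C. -/
open Real

set_option maxHeartbeats 1000000 in
theorem fresnel_distance_approx_error :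
    ∃ C : ℝ, 0 < C ∧ ∀ r θ δ d : ℝ, 0 < r → |θ| < 1 → 0 < d → |δ| * d ≤ r / 2 →
      |Real.sqrt (r ^ 2 + δ ^ 2 * d ^ 2 - 2 * r * θ * δ * d) -
        (r - δ * d * θ + δ ^ 2 * d ^ 2 * (1 - θ ^ 2) / (2 * r))| ≤
      C * |δ * d| ^ 3 / r ^ 2 := by
  refine ⟨9/4, by norm_num, ?_⟩
  intro r θ δ d hr hθ hd hδ
  set x := δ * d with hx
  have hxabs : |x| ≤ r / 2 := by rw [hx, abs_mul, abs_of_pos hd]; exact hδ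
  have hθ1 : |θ| ≤ 1 := hθ.le
  have hθ2 : θ ^ 2 ≤ 1 := by nlinarith [abs_nonneg θ, sq_abs θ]
  set A := r ^ 2 + δ ^ 2 * d ^ 2 - 2 * r * θ * δ * d with hA
  set B := r - δ * d * θ + δ ^ 2 * d ^ 2 * (1 - θ ^ 2) / (2 * r) with hB
  clear_value x A B
  have hAx : A = r ^ 2 + x ^ 2 - 2 * r * θ * x := by rw [hA, hx]; ring
  have hAnn : 0 ≤ A := by
    rw [hAx]; nlinarith [sq_nonneg (r - θ * x), sq_nonneg x]
  have hxθ : x * θ ≤ r / 2 := by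
    calc x * θ ≤ |x * θ| := le_abs_self _
      _ = |x| * |θ| := abs_mul _ _
      _ ≤ (r / 2) * 1 := mul_le_mul hxabs hθ1 (abs_nonneg θ) (by linarith)
      _ = r / 2 := by ring
  have hBge : r / 2 ≤ B := by
    have h1 : 0 ≤ δ ^ 2 * d ^ 2 * (1 - θ ^ 2) / (2 * r) := by
      apply div_nonneg _ (by linarith)
      nlinarith [sq_nonneg (δ * d)]
    have h2 : δ * d * θ = x * θ := by rw [hx]
    rw [hB]; nlinarith
  have hrne : r ≠ 0 := ne_of_gt hr
  have hid : r ^ 2 * (A - B ^ 2) =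
      x ^ 3 * θ * (1 - θ ^ 2) * r - x ^ 4 * (1 - θ ^ 2) ^ 2 / 4 := by
    rw [hA, hB, hx]; field_simp; ring
  have habs3 : (0:ℝ) ≤ |x| ^ 3 := by positivity
  have hb1 : |x ^ 3 * θ * (1 - θ ^ 2) * r| ≤ |x| ^ 3 * r := by
    rw [abs_mul, abs_mul, abs_mul, abs_pow, abs_of_pos hr]
    have h1θ : |1 - θ ^ 2| ≤ 1 := by
      rw [abs_of_nonneg (by nlinarith)]; nlinarith [sq_nonneg θ]
    calc |x| ^ 3 * |θ| * |1 - θ ^ 2| * r ≤ |x| ^ 3 * 1 * 1 * r := by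
          gcongr <;> positivity
      _ = |x| ^ 3 * r := by ring
  have hb2 : |x ^ 4 * (1 - θ ^ 2) ^ 2 / 4| ≤ |x| ^ 3 * (r / 2) / 4 := by
    have hx4 : x ^ 4 = |x| ^ 3 * |x| := by
      rw [← abs_pow, ← abs_mul, show x ^ 3 * x = x ^ 4 by ring]
      exact (abs_of_nonneg (by positivity)).symm
    have h1θ : (1 - θ ^ 2) ^ 2 ≤ 1 := by
      have h0 : 0 ≤ 1 - θ ^ 2 := by linarith
      have h1 : 1 - θ ^ 2 ≤ 1 := by linarith [sq_nonneg θ]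
      calc (1 - θ ^ 2) ^ 2 ≤ 1 ^ 2 := by gcongr
        _ = 1 := one_pow 2
    have hnn : (0:ℝ) ≤ x ^ 4 * (1 - θ ^ 2) ^ 2 / 4 := by positivity
    rw [abs_of_nonneg hnn, hx4]
    calc |x| ^ 3 * |x| * (1 - θ ^ 2) ^ 2 / 4 ≤ |x| ^ 3 * (r / 2) * 1 / 4 := by
          gcongr
      _ = |x| ^ 3 * (r / 2) / 4 := by ring
  have hAB : |A - B ^ 2| * r ^ 2 ≤ (9 / 8) * |x| ^ 3 * r := by
    have h1 : |A - B ^ 2| * r ^ 2 = |r ^ 2 * (A - B ^ 2)| := by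
      rw [abs_mul, abs_of_pos (by positivity : (0:ℝ) < r ^ 2)]; ring
    rw [h1, hid]
    calc |x ^ 3 * θ * (1 - θ ^ 2) * r - x ^ 4 * (1 - θ ^ 2) ^ 2 / 4|
        ≤ |x ^ 3 * θ * (1 - θ ^ 2) * r| + |x ^ 4 * (1 - θ ^ 2) ^ 2 / 4| :=
          abs_sub _ _
      _ ≤ |x| ^ 3 * r + |x| ^ 3 * (r / 2) / 4 := add_le_add hb1 hb2
      _ = (9 / 8) * |x| ^ 3 * r := by ring
  have hsq : (Real.sqrt A - B) * (Real.sqrt A + B) = A - B ^ 2 := by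
    have h := Real.sq_sqrt hAnn
    linear_combination h
  have hsum : 0 ≤ Real.sqrt A + B := by
    have := Real.sqrt_nonneg A; linarith
  have h2 : |Real.sqrt A - B| * (r / 2) ≤ |A - B ^ 2| := by
    calc |Real.sqrt A - B| * (r / 2)
        ≤ |Real.sqrt A - B| * (Real.sqrt A + B) := by
          apply mul_le_mul_of_nonneg_left _ (abs_nonneg _)
          have := Real.sqrt_nonneg A; linarith
      _ = |(Real.sqrt A - B) * (Real.sqrt A + B)| := by
          rw [abs_mul, abs_of_nonneg hsum]
      _ = |A - B ^ 2| := by rw [hsq]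
  rw [le_div_iff₀ (by positivity : (0:ℝ) < r ^ 2)]
  nlinarith [mul_le_mul_of_nonneg_right h2 (sq_nonneg r), hAB, hr,
    abs_nonneg (Real.sqrt A - B), habs3, mul_pos hr hr]
end
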